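/- There exists a finite rotation-puzzle instance 𝒜 over the two-color tile set T_2 (the two-color AND subpuzzle, simulating an AND gate) with two designated input boundary edges at its bottom and one designated output boundary edge at its top, such that for each pair of colors (c₁, c₂) ∈ {blue, red}² the instance 𝒜 has exactly one solution whose colors at the two input edges are c₁ and c₂ respectively, and this solution has color blue at the output edge if c₁ = c₂ = blue, and color red at the output edge otherwise. -/

import Mathlib

/-- The two Tantrix colors used in the two-color tile set. -/
inductive Color where
  | red
  | blue
deriving DecidableEq

/-- A tile is its clockwise color sequence: a word of length 6 over the colors,
edges indexed `0, …, 5` clockwise. -/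
abbrev Tile := Fin 6 → Color

/-- Cyclic rotation of a tile by `k` steps: edge `i` of the rotated tile carries the
color of edge `i + k` of the original sequence.  Two solutions are compared as the
assigned rotated color sequences, so orientations of a tile with identical color
sequences are identified. -/
def rotTile (k : Fin 6) (t : Tile) : Tile := fun i => t (i + k)

open Color in
/-- The two-color tile set `T₂`, consisting of the 8 color sequences
bbrrrr, rrbbbb, brrbrr, rbbrbb, rbrrrb, brbbbr, bbbbbb, rrrrrr. -/
def T2 : Set Tile :=
  { ![blue,blue,red,red,red,red],
    ![red,red,blue,blue,blue,blue],
    ![blue,red,red,blue,red,red],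
    ![red,blue,blue,red,blue,blue],
    ![red,blue,red,red,red,blue],
    ![blue,red,blue,blue,blue,red],
    ![blue,blue,blue,blue,blue,blue],
    ![red,red,red,red,red,red] }

/-- The six neighbor offsets of the hexagonal layout of `ℤ²`, listed clockwise
starting from straight up; edge `i` of a tile at `x` is the edge shared with the
neighboring point `x + dirs i`, and opposite directions differ by `3` (mod 6).
Two points are neighbors exactly if their difference is one of these offsets. -/
def dirs : Fin 6 → ℤ × ℤ := ![(0,1), (1,1), (1,0), (0,-1), (-1,-1), (-1,0)]

/-- A finite rotation-puzzle instance over the tile set `T2`: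
a function from a finite set of points of `ℤ²` to `T2`. -/
structure Puzzle where
  tiles : ℤ × ℤ → Option Tile
  finite : {x | tiles x ≠ none}.Finite
  memT2 : ∀ x t, tiles x = some t → t ∈ T2

/-- `sol` is a solution of the instance `P`: it assigns to each occupied point a
cyclic rotation of the tile placed there, such that for every pair of neighboring
occupied points the two assigned sequences give the same color to their joint edge
(edge `d` of the tile at `x` is glued to edge `d + 3` of the tile at `x + dirs d`). -/
def IsSolution (P : Puzzle) (sol : ℤ × ℤ → Option Tile) : Prop :=
  (∀ x, (P.tiles x = none → sol x = none) ∧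
    (∀ t, P.tiles x = some t → ∃ k : Fin 6, sol x = some (rotTile k t))) ∧
  (∀ (x : ℤ × ℤ) (d : Fin 6) (s s' : Tile),
    sol x = some s → sol (x + dirs d) = some s' → s d = s' (d + 3))

/-- `(x, d)` is a boundary edge of `P`: the point `x` is occupied and its
neighbor in direction `d` is not. -/
def IsBoundary (P : Puzzle) (x : ℤ × ℤ) (d : Fin 6) : Prop :=
  P.tiles x ≠ none ∧ P.tiles (x + dirs d) = none

/-- The solution `sol` has color `c` at the edge in direction `d` of the tile at `x`. -/
def SolColor (sol : ℤ × ℤ → Option Tile) (x : ℤ × ℤ) (d : Fin 6) (c : Color) : Prop :=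
  ∃ s, sol x = some s ∧ s d = c

/-!
The gate consists of five tiles: bbbbbb at `(0,1)`, rrrrrr at `(2,0)`, rrbbbb at the input
tile `(0,0)`, and bbrrrr at the input tile `(1,0)` and the output tile `(1,1)`. Every rotation
fixes a monochromatic tile, so a solution is determined by the orientations of the other three,
each of which is the position of its unique pair of adjacent minority-colored edges. The
monochromatic tiles pin blue at edge 0 of `(0,0)` and edge 5 of `(1,1)` and red at edge 2 of
`(1,0)`; together with the three inner joints and the two input colors this leaves exactly
one of the 6³ orientation triples (an exhaustive check), and in it the output edge is blue
only when both inputs are blue.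
-/

open Color

def rotateOn (S : Finset (ℤ × ℤ)) (t : ℤ × ℤ → Tile) (k : ℤ × ℤ → Fin 6) :
    ℤ × ℤ → Option Tile :=
  fun x => if x ∈ S then some (rotTile (k x) (t x)) else none

def EdgesMatch (S : Finset (ℤ × ℤ)) (t : ℤ × ℤ → Tile) (k : ℤ × ℤ → Fin 6) : Prop :=
  ∀ x ∈ S, ∀ d, x + dirs d ∈ S →
    rotTile (k x) (t x) d = rotTile (k (x + dirs d)) (t (x + dirs d)) (d + 3)

instance (S : Finset (ℤ × ℤ)) (t : ℤ × ℤ → Tile) (k : ℤ × ℤ → Fin 6) :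
    Decidable (EdgesMatch S t k) :=
  Finset.decidableDforallFinset

def Puzzle.ofFinset (S : Finset (ℤ × ℤ)) (t : ℤ × ℤ → Tile) (ht : ∀ x ∈ S, t x ∈ T2) :
    Puzzle where
  tiles x := if x ∈ S then some (t x) else none
  finite := S.finite_toSet.subset fun x hx => by
    by_contra h
    exact hx (if_neg h)
  memT2 x s h := by
    by_cases hx : x ∈ S
    · rw [if_pos hx, Option.some_inj] at h
      exact h ▸ ht x hx
    · rw [if_neg hx] at h
      cases h

section ofFinset

variable {S : Finset (ℤ × ℤ)} {t : ℤ × ℤ → Tile} {ht : ∀ x ∈ S, t x ∈ T2}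

theorem isBoundary_ofFinset_iff {x : ℤ × ℤ} {d : Fin 6} :
    IsBoundary (Puzzle.ofFinset S t ht) x d ↔ x ∈ S ∧ x + dirs d ∉ S := by
  simp [IsBoundary, Puzzle.ofFinset]

theorem isSolution_ofFinset_rotateOn_iff {k : ℤ × ℤ → Fin 6} :
    IsSolution (Puzzle.ofFinset S t ht) (rotateOn S t k) ↔ EdgesMatch S t k := by
  constructor
  · intro h x hx d hd
    exact h.2 x d _ _ (if_pos hx) (if_pos hd)
  · intro h
    refine ⟨fun x => ⟨fun hx => ?_, fun s hs => ?_⟩, fun x d s s' hs hs' => ?_⟩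
    · by_cases hxS : x ∈ S <;> simp_all [Puzzle.ofFinset, rotateOn]
    · exact ⟨k x, by by_cases hxS : x ∈ S <;> simp_all [Puzzle.ofFinset, rotateOn]⟩
    · by_cases hx : x ∈ S <;> by_cases hd : x + dirs d ∈ S <;> simp only [rotateOn, hx, hd,
        if_true, if_false, Option.some_inj, reduceCtorEq] at hs hs'
      subst hs hs'
      exact h x hx d hd

theorem IsSolution.exists_eq_rotateOn {sol : ℤ × ℤ → Option Tile}
    (h : IsSolution (Puzzle.ofFinset S t ht) sol) : ∃ k, sol = rotateOn S t k := by
  have hrot : ∀ x, ∃ k : Fin 6, x ∈ S → sol x = some (rotTile k (t x)) := fun x => by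
    by_cases hx : x ∈ S
    · obtain ⟨k, hk⟩ := (h.1 x).2 (t x) (if_pos hx)
      exact ⟨k, fun _ => hk⟩
    · exact ⟨0, fun hx' => absurd hx' hx⟩
  choose k hk using hrot
  refine ⟨k, funext fun x => ?_⟩
  by_cases hx : x ∈ S
  · rw [rotateOn, if_pos hx, hk x hx]
  · rw [rotateOn, if_neg hx, (h.1 x).1 (if_neg hx)]

end ofFinset

section rotateOn

variable {S : Finset (ℤ × ℤ)} {t : ℤ × ℤ → Tile}

theorem rotateOn_congr {k k' : ℤ × ℤ → Fin 6}
    (h : ∀ x ∈ S, rotTile (k x) (t x) = rotTile (k' x) (t x)) :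
    rotateOn S t k = rotateOn S t k' := by
  funext x
  by_cases hx : x ∈ S
  · simp only [rotateOn, hx, if_true, h x hx]
  · simp only [rotateOn, hx, if_false]

theorem solColor_rotateOn_iff {k : ℤ × ℤ → Fin 6} {x : ℤ × ℤ} {d : Fin 6} {c : Color}
    (hx : x ∈ S) : SolColor (rotateOn S t k) x d c ↔ rotTile (k x) (t x) d = c := by
  simp [SolColor, rotateOn, hx]

end rotateOn

def andSites : Finset (ℤ × ℤ) := {(0, 0), (0, 1), (1, 0), (1, 1), (2, 0)}

def andTiles (x : ℤ × ℤ) : Tile :=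
  if x = (0, 1) then fun _ => blue
  else if x = (2, 0) then fun _ => red
  else if x = (0, 0) then ![red, red, blue, blue, blue, blue]
  else ![blue, blue, red, red, red, red]

theorem andTiles_mem_T2 : ∀ x ∈ andSites, andTiles x ∈ T2 := by
  simp only [andSites, Finset.mem_insert, Finset.mem_singleton]
  rintro x (rfl | rfl | rfl | rfl | rfl) <;>
    simp only [T2, Set.mem_insert_iff, Set.mem_singleton_iff] <;> decide

def andGadget : Puzzle := Puzzle.ofFinset andSites andTiles andTiles_mem_T2

def andRot (r : Fin 6 × Fin 6 × Fin 6) (x : ℤ × ℤ) : Fin 6 :=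
  if x = (0, 0) then r.1 else if x = (1, 0) then r.2.1 else if x = (1, 1) then r.2.2 else 0

def andRotations : Color → Color → Fin 6 × Fin 6 × Fin 6
  | blue, blue => (5, 3, 1)
  | blue, red => (2, 2, 2)
  | red, blue => (4, 3, 2)
  | red, red => (3, 2, 2)

theorem rotateOn_andTiles_eq_andRot (k : ℤ × ℤ → Fin 6) :
    rotateOn andSites andTiles k =
      rotateOn andSites andTiles (andRot (k (0, 0), k (1, 0), k (1, 1))) := by
  refine rotateOn_congr fun x hx => ?_
  simp only [andSites, Finset.mem_insert, Finset.mem_singleton] at hx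
  -- at `(0,1)` and `(2,0)` both sides are the same monochromatic tile
  rcases hx with rfl | rfl | rfl | rfl | rfl <;> rfl

theorem andRotations_spec (c₁ c₂ : Color) :
    EdgesMatch andSites andTiles (andRot (andRotations c₁ c₂)) ∧
      rotTile (andRotations c₁ c₂).1 (andTiles (0, 0)) 3 = c₁ ∧
      rotTile (andRotations c₁ c₂).2.1 (andTiles (1, 0)) 3 = c₂ ∧
      rotTile (andRotations c₁ c₂).2.2 (andTiles (1, 1)) 0 =
        if c₁ = blue ∧ c₂ = blue then blue else red := by
  cases c₁ <;> cases c₂ <;> decide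

theorem rotTile_andRot_eq_andRotations (c₁ c₂ : Color) : ∀ r : Fin 6 × Fin 6 × Fin 6,
    EdgesMatch andSites andTiles (andRot r) →
      rotTile r.1 (andTiles (0, 0)) 3 = c₁ → rotTile r.2.1 (andTiles (1, 0)) 3 = c₂ →
      ∀ x ∈ andSites, rotTile (andRot r x) (andTiles x) =
        rotTile (andRot (andRotations c₁ c₂) x) (andTiles x) := by
  cases c₁ <;> cases c₂ <;> decide +kernel

/-- the two-color AND subpuzzle: two input boundary edges at the bottom, one output boundary edge at the top; for each pair `(c₁, c₂) ∈ {blue, red}²` there is exactly one solution with colors `c₁`, `c₂` at the input edges, and it has color blue at the output edge if `c₁ = c₂ = blue` and color red otherwise. -/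
theorem two_color_AND_subpuzzle :
    ∃ (P : Puzzle) (iL iR xOut : ℤ × ℤ),
      IsBoundary P iL 3 ∧ IsBoundary P iR 3 ∧ IsBoundary P xOut 0 ∧
      iL ≠ iR ∧ iL.2 < xOut.2 ∧ iR.2 < xOut.2 ∧
      ∀ c₁ ∈ ({Color.blue, Color.red} : Set Color),
        ∀ c₂ ∈ ({Color.blue, Color.red} : Set Color),
          ∃ sol : ℤ × ℤ → Option Tile,
            (IsSolution P sol ∧ SolColor sol iL 3 c₁ ∧ SolColor sol iR 3 c₂ ∧
              SolColor sol xOut 0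
                (if c₁ = Color.blue ∧ c₂ = Color.blue then Color.blue else Color.red)) ∧
            (∀ sol' : ℤ × ℤ → Option Tile,
              IsSolution P sol' → SolColor sol' iL 3 c₁ → SolColor sol' iR 3 c₂ →
                sol' = sol) := by
  refine ⟨andGadget, (0, 0), (1, 0), (1, 1), isBoundary_ofFinset_iff.2 (by decide),
    isBoundary_ofFinset_iff.2 (by decide), isBoundary_ofFinset_iff.2 (by decide),
    by decide, by decide, by decide, fun c₁ _ c₂ _ => ?_⟩
  obtain ⟨hmatch, h₁, h₂, hout⟩ := andRotations_spec c₁ c₂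
  refine ⟨rotateOn andSites andTiles (andRot (andRotations c₁ c₂)),
    ⟨isSolution_ofFinset_rotateOn_iff.2 hmatch, (solColor_rotateOn_iff (by decide)).2 h₁,
      (solColor_rotateOn_iff (by decide)).2 h₂, (solColor_rotateOn_iff (by decide)).2 hout⟩,
    fun sol hsol hc₁ hc₂ => ?_⟩
  obtain ⟨k, rfl⟩ := hsol.exists_eq_rotateOn
  rw [rotateOn_andTiles_eq_andRot] at hsol hc₁ hc₂ ⊢
  exact rotateOn_congr <| rotTile_andRot_eq_andRotations c₁ c₂ _ (isSolution_ofFinset_rotateOn_iff.1 hsol)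
    ((solColor_rotateOn_iff (by decide)).1 hc₁) ((solColor_rotateOn_iff (by decide)).1 hc₂)
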